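/- Let A1, …, An be deterministic top-down tree automata over a ranked alphabet Σ with pairwise disjoint state sets, let σ ∈ Σ have rank ≥ 1 and e ∈ Σ^(0). Let M1 be the deterministic top-down tree transducer with input alphabet Σ and output alphabet Σ ∪ {δ^(n)} whose states are a fresh initial state q0 together with all states of A1, …, An, whose rules include, for each Ai, the partial-identity rules p(τ(x1,…,xk)) → τ(p1(x1),…,pk(xk)) for every transition p(τ) → (p1,…,pk) of Ai (so that the initial state qi of Ai computes the partial identity on L(Ai)), plus the two rules q0(σ(x1,…,xm)) → δ(q1(x1), q2(x1), …, qn(x1)) and q0(e) → e. Let M2 be the single-state transducer with the sole rule p(e) → e, so τ_{M2} = {(e, e)}. Then M1 and M2 are equivalent if and only if L(A1) ∩ ⋯ ∩ L(An) = ∅. -/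

import Mathlib

/-! ## Finite ordered ranked trees -/

/-- Finite ordered labeled trees. -/
inductive RTree (α : Type) : Type
  | node : α → List (RTree α) → RTree α

namespace RTree

variable {α β : Type}

/-- The label of the root node. -/
def label : RTree α → α
  | node a _ => a

mutual
  /-- The size (number of nodes) of a tree. -/
  def size : RTree α → ℕ
    | node _ ts => 1 + sizeList ts
  def sizeList : List (RTree α) → ℕ
    | [] => 0
    | t :: ts => size t + sizeList ts
end

mutual
  /-- The height of a tree (a leaf has height 1). -/
  def height : RTree α → ℕ
    | node _ ts => 1 + heightList ts
  def heightList : List (RTree α) → ℕ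
    | [] => 0
    | t :: ts => max (height t) (heightList ts)
end

mutual
  /-- Relabeling of a tree. -/
  def map (f : α → β) : RTree α → RTree β
    | node a ts => node (f a) (mapList f ts)
  def mapList (f : α → β) : List (RTree α) → List (RTree β)
    | [] => []
    | t :: ts => map f t :: mapList f ts
end

/-- `WF rk t` means `t` is a tree over the ranked alphabet with rank function `rk`:
every node labeled `a` has exactly `rk a` children.  Thus `T_Σ = {t | WF rk t}`. -/
inductive WF (rk : α → ℕ) : RTree α → Prop
  | node {a : α} {ts : List (RTree α)} :
      ts.length = rk a → (∀ t ∈ ts, WF rk t) → WF rk (node a ts)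

/-- `SubtreeAt t u r`: `u` is (the Dewey path of) a node of `t` and `r` is the
subtree of `t` rooted at `u`. -/
inductive SubtreeAt : RTree α → List ℕ → RTree α → Prop
  | here (t : RTree α) : SubtreeAt t [] t
  | child {a : α} {ts : List (RTree α)} {i : ℕ} {u : List ℕ} {ti r : RTree α} :
      ts[i]? = some ti → SubtreeAt ti u r → SubtreeAt (node a ts) (i :: u) r

/-- `ReplaceAt t u r t'`: `u` is a node of `t`, and `t'` is the tree `t[u ← r]`
obtained from `t` by replacing the subtree rooted at `u` by `r`. -/
inductive ReplaceAt : RTree α → List ℕ → RTree α → RTree α → Prop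
  | here (t r : RTree α) : ReplaceAt t [] r r
  | child {a : α} {ts : List (RTree α)} {i : ℕ} {u : List ℕ} {r ti ti' : RTree α} :
      ts[i]? = some ti → ReplaceAt ti u r ti' →
      ReplaceAt (node a ts) (i :: u) r (node a (ts.set i ti'))

end RTree

/-- A (complete) deterministic finite-state bottom-up tree automaton over the
alphabet `S`, with state set `P` and final states `final`. -/
structure BUA (S P : Type) where
  delta : S → List P → P
  final : Set P

variable {S P : Type}

mutual
  /-- The state reached by a bottom-up automaton on a tree. -/
  def buaRun (A : BUA S P) : RTree S → P
    | .node a ts => A.delta a (buaRunList A ts)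
  def buaRunList (A : BUA S P) : List (RTree S) → List P
    | [] => []
    | t :: ts => buaRun A t :: buaRunList A ts
end

/-- A tree language over the ranked alphabet `(S, rk)` is regular if it is recognized
by a deterministic finite-state bottom-up tree automaton. -/
def RegularTreeLang (rk : S → ℕ) (L : Set (RTree S)) : Prop :=
  ∃ (P : Type) (_ : Fintype P) (A : BUA S P),
    L = {t | RTree.WF rk t ∧ buaRun A t ∈ A.final}
/-! ## Deterministic macro tree transducers

A state of rank `m+1` is encoded by `prm q = m` (its number of context parameters).
Right-hand sides of rules are trees over `Δ ∪ Q ∪ X ∪ Y`, where every `Q`-labeled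
node has an input variable `x_i` as its (implicit) first child; this is encoded by
the constructor `MRhs.call q i ps`.  A top-down tree transducer is exactly a macro
tree transducer all of whose states have rank one (`prm q = 0`).

To be able to talk about partial inputs `s[u ← x]`, input trees are trees over
`Option S`, where `none` plays the role of the fresh rank-0 symbol `x`; an
ordinary input tree `s` is represented as `RTree.map some s`.  Outputs (sentential
forms) are trees over the alphabet `PL Q D`: output symbols `PL.out d`, unresolved
state calls `PL.st q` (i.e. `q(x, t₁, …, t_m)`, whose children are the current
parameter trees), and formal context parameters `PL.pr j` (i.e. `y_{j+1}`). -/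

/-- Labels of sentential forms produced by a macro tree transducer. -/
inductive PL (Q D : Type) : Type
  | out : D → PL Q D
  | st : Q → PL Q D
  | pr : ℕ → PL Q D

/-- Right-hand sides of rules of a macro tree transducer with states `Q` and output
alphabet `D`: `out d ts` is an output symbol with subtrees, `param j` is the context
parameter `y_{j+1}`, and `call q i ps` is a state call `q(x_{i+1}, ps)`. -/
inductive MRhs (Q D : Type) : Type
  | out : D → List (MRhs Q D) → MRhs Q D
  | param : ℕ → MRhs Q D
  | call : Q → ℕ → List (MRhs Q D) → MRhs Q D

/-- Well-formedness of a right-hand side for a rule of a state with `m` parameters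
and an input symbol of rank `k`: output symbols have the right number of children,
parameters are among `y_1, …, y_m`, input variables are among `x_1, …, x_k`, and a
call of state `q'` passes exactly `prm q'` parameter trees. -/
inductive RhsWF {Q D : Type} (rkD : D → ℕ) (prm : Q → ℕ) (k m : ℕ) : MRhs Q D → Prop
  | out {d ts} : ts.length = rkD d → (∀ t ∈ ts, RhsWF rkD prm k m t) →
      RhsWF rkD prm k m (.out d ts)
  | param {j} : j < m → RhsWF rkD prm k m (.param j)
  | call {q i ps} : i < k → ps.length = prm q → (∀ t ∈ ps, RhsWF rkD prm k m t) →
      RhsWF rkD prm k m (.call q i ps)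

/-- A deterministic macro tree transducer with states `Q`, input alphabet `(S, rkS)`
and output alphabet `(D, rkD)`.  `prm q` is the number of context parameters of
state `q` (so `q` has rank `prm q + 1`); `rules q σ` is the right-hand side of the
`(q,σ)`-rule, if present (determinism: at most one rule per pair). -/
structure MTT (Q S D : Type) where
  rkS : S → ℕ
  rkD : D → ℕ
  prm : Q → ℕ
  init : Q
  rules : Q → S → Option (MRhs Q D)

namespace MTT

variable {Q S D : Type}

/-- `M` is a well-formed macro tree transducer: the initial state has rank one and
all right-hand sides are well-formed. -/
def Proper (M : MTT Q S D) : Prop :=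
  M.prm M.init = 0 ∧
    ∀ q σ r, M.rules q σ = some r → RhsWF M.rkD M.prm (M.rkS σ) (M.prm q) r

/-- `M` is total: there is exactly one rule for every state and input symbol. -/
def Total (M : MTT Q S D) : Prop := ∀ q σ, (M.rules q σ).isSome

end MTT

/-- A top-down tree transducer is a macro tree transducer each of whose states has
rank one, i.e. no context parameters. -/
def IsTopDown {Q S D : Type} (M : MTT Q S D) : Prop := ∀ q, M.prm q = 0

/-- A macro tree transducer is monadic if its input and output ranked alphabets
only contain symbols of rank 1 and rank 0. -/
def MTT.Monadic {Q S D : Type} (M : MTT Q S D) : Prop :=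
  (∀ σ, M.rkS σ ≤ 1) ∧ (∀ d, M.rkD d ≤ 1)

variable {Q S D : Type}

mutual
  /-- Second-order substitution of the parameter leaves `y_{j+1}` of a sentential
  form by the trees `vs`. -/
  def psubst (vs : List (RTree (PL Q D))) : RTree (PL Q D) → RTree (PL Q D)
    | .node (.pr j) _ => vs.getD j (.node (.pr j) [])
    | .node (.out d) ts => .node (.out d) (psubstList vs ts)
    | .node (.st q) ts => .node (.st q) (psubstList vs ts)
  def psubstList (vs : List (RTree (PL Q D))) :
      List (RTree (PL Q D)) → List (RTree (PL Q D))
    | [] => []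
    | t :: ts => psubst vs t :: psubstList vs ts
end

/-- The fresh rank-0 input symbol `x` used in partial inputs `s[u ← x]`. -/
def xLeaf {S : Type} : RTree (Option S) := .node none []

mutual
  /-- Big-step semantics of a macro tree transducer: `MEval M q s t` means that the
  computation of `M` started in state `q` on the input tree `s` (a tree over
  `Option S`, where `none` is the fresh symbol `x` of partial inputs) produces the
  (sentential form) tree `t`.  On the symbol `x` the computation blocks, yielding
  the unresolved call `q(x, y_1, …, y_m)`.  For `s ∈ T_Σ` (no occurrence of `x`)
  and well-formed transducers, `t` contains no `PL.st` labels, and `M_q(s)` is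
  defined iff such a `t` exists; determinism makes `t` unique. -/
  inductive MEval (M : MTT Q S D) : Q → RTree (Option S) → RTree (PL Q D) → Prop
    | atX (q : Q) :
        MEval M q (.node none [])
          (.node (.st q) ((List.range (M.prm q)).map fun j => .node (.pr j) []))
    | step {q : Q} {σ : S} {ss : List (RTree (Option S))} {r : MRhs Q D}
        {t : RTree (PL Q D)} :
        M.rules q σ = some r → MExpand M ss r t → MEval M q (.node (some σ) ss) t

  /-- Evaluation of a right-hand side with current input subtrees `ss`. -/
  inductive MExpand (M : MTT Q S D) :
      List (RTree (Option S)) → MRhs Q D → RTree (PL Q D) → Prop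
    | out {ss d ts us} : MExpandList M ss ts us →
        MExpand M ss (.out d ts) (.node (.out d) us)
    | param {ss j} : MExpand M ss (.param j) (.node (.pr j) [])
    | call {ss : List (RTree (Option S))} {q : Q} {i : ℕ} {ps : List (MRhs Q D)}
        {si : RTree (Option S)} {vs : List (RTree (PL Q D))} {u : RTree (PL Q D)} :
        ss[i]? = some si → MExpandList M ss ps vs → MEval M q si u →
        MExpand M ss (.call q i ps) (psubst vs u)

  inductive MExpandList (M : MTT Q S D) :
      List (RTree (Option S)) → List (MRhs Q D) → List (RTree (PL Q D)) → Prop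
    | nil {ss} : MExpandList M ss [] []
    | cons {ss t ts u us} : MExpand M ss t u → MExpandList M ss ts us →
        MExpandList M ss (t :: ts) (u :: us)
end

/-- The translation `τ_M ⊆ T_Σ × T_Δ` realized by a macro tree transducer `M`
(the graph of the partial function `τ_M : T_Σ ⇀ T_Δ`). -/
def MTT.tau (M : MTT Q S D) : Set (RTree S × RTree D) :=
  {p | RTree.WF M.rkS p.1 ∧ MEval M M.init (RTree.map some p.1) (RTree.map PL.out p.2)}

/-! ## Statement 19: equivalence of top-down tree transducers is Exptime-hard —
the reduction from intersection emptiness of deterministic top-down tree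
automata. -/

/-- A deterministic top-down tree automaton over `S` with state set `St`:
`trans p τ = some [p1,…,pk]` encodes the transition `p(τ) → (p1,…,pk)`. -/
structure TDA (S St : Type) where
  init : St
  trans : St → S → Option (List St)

variable {S St : Type}

mutual
  /-- `TDAccept A p s`: the run of `A` started in state `p` at the root of `s` is
  defined at every node of `s`. -/
  inductive TDAccept (A : TDA S St) : St → RTree S → Prop
    | node {p : St} {σ : S} {ss : List (RTree S)} {ps : List St} :
        A.trans p σ = some ps → TDAcceptList A ps ss → TDAccept A p (.node σ ss)
  inductive TDAcceptList (A : TDA S St) : List St → List (RTree S) → Prop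
    | nil : TDAcceptList A [] []
    | cons {p ps s ss} : TDAccept A p s → TDAcceptList A ps ss →
        TDAcceptList A (p :: ps) (s :: ss)
end

/-- The tree language accepted by a deterministic top-down tree automaton. -/
def tdaLang (rkS : S → ℕ) (A : TDA S St) : Set (RTree S) :=
  {s | RTree.WF rkS s ∧ TDAccept A A.init s}

section Construction

variable [DecidableEq S] (rkS : S → ℕ) (n : ℕ) {St : Fin n → Type}
  (A : ∀ i, TDA S (St i)) (σsym esym : S)

/-- The top-down tree transducer `M1` built from the automata `A 0, …, A (n-1)`:
its states are a fresh initial state `q0 = none` together with the (disjointly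
united) states of the `A i`; its output alphabet is `Σ ∪ {δ}` (encoded as
`Option S`, with `none = δ` of rank `n`).  In state `some ⟨i, p⟩` it works as the
partial identity determined by `A i`; the initial state has the two rules
`q0(σ(x1,…,xm)) → δ(q1(x1), …, qn(x1))` (where `qi` is the initial state of
`A i`) and `q0(e) → e`. -/
def hardM1 : MTT (Option ((i : Fin n) × St i)) S (Option S) where
  rkS := rkS
  rkD := fun d => match d with
    | none => n
    | some σ => rkS σ
  prm := fun _ => 0
  init := none
  rules := fun q τ =>
    match q with
    | none =>
        if τ = σsym then
          some (.out none ((List.finRange n).map fun i =>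
            MRhs.call (some ⟨i, (A i).init⟩) 0 []))
        else if τ = esym then some (.out (some esym) []) else none
    | some ⟨i, p⟩ =>
        ((A i).trans p τ).map fun ps =>
          MRhs.out (some τ)
            (((List.range ps.length).zip ps).map fun pr =>
              MRhs.call (some ⟨i, pr.2⟩) pr.1 [])

/-- The single-state top-down tree transducer `M2` with the sole rule
`p(e) → e`, realizing the translation `{(e, e)}`. -/
def hardM2 : MTT Unit S (Option S) where
  rkS := rkS
  rkD := fun d => match d with
    | none => n
    | some σ => rkS σ
  prm := fun _ => 0
  init := ()
  rules := fun _ τ =>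
    if τ = esym then some (.out (some esym) []) else none

end Construction

/-! In a state of `A i` the transducer `M1` computes the partial identity on the trees that
`A i` accepts from that state. Hence `M1` translates `σ(s, …)` exactly when the first
subtree `s` is accepted by every `A i`, and otherwise it only translates `e ↦ e`, which is
all that `M2` does. -/

theorem iInter_setOf_and_nonempty_iff {ι α : Type*} {P : α → Prop} {R : ι → α → Prop}
    (hP : ∃ a, P a) : (⋂ i, {a | P a ∧ R i a}).Nonempty ↔ ∃ a, P a ∧ ∀ i, R i a := by
  constructor
  · rintro ⟨a, ha⟩
    rw [Set.mem_iInter] at ha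
    cases isEmpty_or_nonempty ι with
    | inl _ => exact hP.imp fun _ hb => ⟨hb, isEmptyElim⟩
    | inr hι => exact ⟨a, (ha hι.some).1, fun i => (ha i).2⟩
  · rintro ⟨a, ha, hR⟩
    exact ⟨a, Set.mem_iInter.2 fun i => ⟨ha, hR i⟩⟩

namespace RTree

variable {α β γ : Type}

@[induction_eliminator]
theorem induction {motive : RTree α → Prop}
    (node : ∀ a ts, (∀ t ∈ ts, motive t) → motive (node a ts)) (t : RTree α) : motive t :=
  RTree.rec (motive_1 := motive) (motive_2 := fun ts => ∀ t ∈ ts, motive t) node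
    (fun _ h => absurd h List.not_mem_nil)
    (fun _ _ hd tl _ h => (List.mem_cons.1 h).elim (· ▸ hd) (tl _))
    t

theorem mapList_eq_map (f : α → β) : ∀ ts : List (RTree α), mapList f ts = ts.map (map f)
  | [] => rfl
  | t :: ts => by rw [mapList, List.map_cons, mapList_eq_map f ts]

@[simp]
theorem map_node (f : α → β) (a : α) (ts : List (RTree α)) :
    map f (node a ts) = node (f a) (ts.map (map f)) := by
  rw [map, mapList_eq_map]

theorem map_map (f : β → γ) (g : α → β) (t : RTree α) :
    map f (map g t) = map (fun a => f (g a)) t := by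
  induction t with
  | node a ts ih => simp only [map_node, List.map_map]; exact congrArg _ (List.map_congr_left ih)

end RTree

section Semantics

theorem psubstList_eq_map (vs : List (RTree (PL Q D))) :
    ∀ ts : List (RTree (PL Q D)), psubstList vs ts = ts.map (psubst vs)
  | [] => rfl
  | t :: ts => by rw [psubstList, List.map_cons, psubstList_eq_map vs ts]

theorem psubst_map_out {β : Type} (vs : List (RTree (PL Q D))) (h : β → D) (s : RTree β) :
    psubst vs (s.map fun b => PL.out (h b)) = s.map fun b => PL.out (h b) := by
  induction s with
  | node a ts ih =>
    rw [RTree.map_node, psubst, psubstList_eq_map, List.map_map]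
    exact congrArg _ (List.map_congr_left ih)

variable {M : MTT Q S D} {ss : List (RTree (Option S))}

theorem mEval_node_some_iff {q : Q} {a : S} {w : RTree (PL Q D)} :
    MEval M q (.node (some a) ss) w ↔ ∃ r, M.rules q a = some r ∧ MExpand M ss r w :=
  ⟨fun | .step h₁ h₂ => ⟨_, h₁, h₂⟩, fun ⟨_, h₁, h₂⟩ => .step h₁ h₂⟩

theorem mExpand_out_iff {d : D} {rs : List (MRhs Q D)} {w : RTree (PL Q D)} :
    MExpand M ss (.out d rs) w ↔ ∃ us, MExpandList M ss rs us ∧ w = .node (.out d) us :=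
  ⟨fun | .out h => ⟨_, h, rfl⟩, fun ⟨_, h, hw⟩ => hw ▸ .out h⟩

theorem mExpand_call_nil_iff {q : Q} {i : ℕ} {w : RTree (PL Q D)} :
    MExpand M ss (.call q i []) w ↔
      ∃ s u, ss[i]? = some s ∧ MEval M q s u ∧ w = psubst [] u := by
  constructor
  · rintro (_ | _ | ⟨hs, hvs, hu⟩)
    cases hvs
    exact ⟨_, _, hs, hu, rfl⟩
  · rintro ⟨s, u, hs, hu, rfl⟩
    exact .call hs .nil hu

theorem mExpandList_iff_forall₂ {rs : List (MRhs Q D)} {us : List (RTree (PL Q D))} :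
    MExpandList M ss rs us ↔ List.Forall₂ (MExpand M ss) rs us := by
  constructor
  · intro h
    induction rs generalizing us with
    | nil => cases h; exact .nil
    | cons r rs ih => cases h with | cons h₁ h₂ => exact .cons h₁ (ih h₂)
  · intro h
    induction h with
    | nil => exact .nil
    | cons h₁ _ ih => exact .cons h₁ ih

theorem tdAcceptList_iff_forall₂ {A : TDA S St} {ps : List St} {ts : List (RTree S)} :
    TDAcceptList A ps ts ↔ List.Forall₂ (TDAccept A) ps ts := by
  constructor
  · intro h
    induction ps generalizing ts with
    | nil => cases h; exact .nil
    | cons p ps ih => cases h with | cons h₁ h₂ => exact .cons h₁ (ih h₂)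
  · intro h
    induction h with
    | nil => exact .nil
    | cons h₁ _ ih => exact .cons h₁ ih

end Semantics

section PartialIdentity

variable [DecidableEq S] {rkS : S → ℕ} {n : ℕ} {St : Fin n → Type}
  {A : ∀ i, TDA S (St i)} {σsym esym : S}

theorem hardM1_rules_some (i : Fin n) (p : St i) (a : S) :
    (hardM1 rkS n A σsym esym).rules (some ⟨i, p⟩) a = ((A i).trans p a).map fun ps =>
      .out (some a)
        (((List.range ps.length).zip ps).map fun pr => .call (some ⟨i, pr.2⟩) pr.1 []) :=
  rfl

theorem tdAccept_of_mEval_hardM1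
    (hA : ∀ i p τ ps, (A i).trans p τ = some ps → ps.length = rkS τ)
    {s : RTree S} (hs : RTree.WF rkS s) {i : Fin n} {p : St i} {t : RTree (PL _ (Option S))}
    (h : MEval (hardM1 rkS n A σsym esym) (some ⟨i, p⟩) (s.map some) t) :
    TDAccept (A i) p s := by
  induction s generalizing p t with
  | node a ts ih =>
    rw [RTree.map_node, mEval_node_some_iff] at h
    obtain ⟨r, hr, hexp⟩ := h
    rw [hardM1_rules_some, Option.map_eq_some_iff] at hr
    obtain ⟨ps, hps, rfl⟩ := hr
    obtain ⟨us, hus, -⟩ := mExpand_out_iff.1 hexp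
    rw [mExpandList_iff_forall₂, List.forall₂_map_left_iff, List.forall₂_iff_get] at hus
    obtain ⟨hlen, hcall⟩ := hus
    simp only [List.get_eq_getElem, List.getElem_zip, List.getElem_range] at hcall
    obtain ⟨hts, hwf⟩ := hs
    have hpts : ps.length = ts.length := (hA i p a ps hps).trans hts.symm
    refine .node hps (tdAcceptList_iff_forall₂.2
      (List.forall₂_iff_get.2 ⟨hpts, fun j hj _ => ?_⟩))
    obtain ⟨s', u, hs', hu, -⟩ :=
      mExpand_call_nil_iff.1 (hcall j (by simpa using hj) (by simpa [← hlen] using hj))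
    simp only [List.getElem?_map, List.getElem?_eq_getElem (hpts ▸ hj), Option.map_some,
      Option.some_inj] at hs'
    subst hs'
    exact ih _ (List.getElem_mem _) (hwf _ (List.getElem_mem _)) hu

theorem mEval_hardM1_of_tdAccept {s : RTree S} {i : Fin n} {p : St i}
    (h : TDAccept (A i) p s) :
    MEval (hardM1 rkS n A σsym esym) (some ⟨i, p⟩) (s.map some)
      (s.map fun a => .out (some a)) := by
  induction s generalizing p with
  | node a ts ih =>
    obtain ⟨hps, hacc⟩ := h
    obtain ⟨hlen, hacc⟩ := List.forall₂_iff_get.1 (tdAcceptList_iff_forall₂.1 hacc)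
    rw [RTree.map_node, RTree.map_node, mEval_node_some_iff, hardM1_rules_some, hps]
    refine ⟨_, rfl, mExpand_out_iff.2 ⟨_, ?_, rfl⟩⟩
    rw [mExpandList_iff_forall₂, List.forall₂_map_left_iff, List.forall₂_iff_get]
    refine ⟨by simp [hlen], fun j hj hj' => ?_⟩
    simp only [List.length_map] at hj'
    simp only [List.get_eq_getElem, List.getElem_zip, List.getElem_range, List.getElem_map]
    refine mExpand_call_nil_iff.2 ⟨_, _, ?_, ih _ (List.getElem_mem hj') (hacc j _ hj'),
      (psubst_map_out _ _ _).symm⟩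
    simp [List.getElem?_eq_getElem hj']

end PartialIdentity

section LeafRule

variable {M : MTT Q S D}

theorem exists_rules_init_of_mem_tau {a : S} {ss : List (RTree S)} {t : RTree D}
    (h : (RTree.node a ss, t) ∈ M.tau) : ∃ r, M.rules M.init a = some r := by
  obtain ⟨-, hev⟩ := h
  rw [RTree.map_node, mEval_node_some_iff] at hev
  obtain ⟨r, hr, -⟩ := hev
  exact ⟨r, hr⟩

theorem mem_tau_node_iff_of_rules_init_eq {e : S} {d : D} (he : M.rkS e = 0)
    (hr : M.rules M.init e = some (.out d [])) {ss : List (RTree S)} {t : RTree D} :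
    (RTree.node e ss, t) ∈ M.tau ↔ ss = [] ∧ t = .node d [] := by
  constructor
  · rintro ⟨⟨hlen, -⟩, hev⟩
    rw [RTree.map_node, mEval_node_some_iff, hr] at hev
    obtain ⟨_, ⟨⟩, hexp⟩ := hev
    obtain ⟨us, hus, hw⟩ := mExpand_out_iff.1 hexp
    cases hus
    obtain ⟨b, bs⟩ := t
    rw [RTree.map_node] at hw
    simp only [RTree.node.injEq, PL.out.injEq, List.map_eq_nil_iff] at hw
    obtain ⟨rfl, rfl⟩ := hw
    exact ⟨List.eq_nil_of_length_eq_zero (hlen.trans he), rfl⟩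
  · rintro ⟨rfl, rfl⟩
    refine ⟨.node he.symm (by simp), ?_⟩
    simp only [RTree.map_node, List.map_nil]
    exact mEval_node_some_iff.2 ⟨_, hr, .out .nil⟩

end LeafRule

section Reduction

variable [DecidableEq S] {rkS : S → ℕ} {n : ℕ} {St : Fin n → Type}
  {A : ∀ i, TDA S (St i)} {σsym esym : S}

theorem tau_hardM2 (he : rkS esym = 0) :
    (hardM2 rkS n esym).tau = {(.node esym [], .node (some esym) [])} := by
  ext ⟨⟨a, ss⟩, t⟩
  by_cases ha : a = esym
  · subst ha
    rw [mem_tau_node_iff_of_rules_init_eq he (if_pos rfl)]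
    simp
  · refine iff_of_false (fun h => ?_) (by simp [ha])
    obtain ⟨r, hr⟩ := exists_rules_init_of_mem_tau h
    exact absurd hr (by simp [hardM2, ha])

theorem hardM1_rules_init_sigma :
    (hardM1 rkS n A σsym esym).rules (hardM1 rkS n A σsym esym).init σsym =
      some (.out none ((List.finRange n).map fun i => .call (some ⟨i, (A i).init⟩) 0 [])) :=
  if_pos rfl

theorem hardM1_rules_init_esym (hne : σsym ≠ esym) :
    (hardM1 rkS n A σsym esym).rules (hardM1 rkS n A σsym esym).init esym =
      some (.out (some esym) []) := by
  simp [hardM1, hne.symm]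

theorem mem_tau_hardM1_of_tdAccept (hσ : 1 ≤ rkS σsym) (he : rkS esym = 0) {s : RTree S}
    (hs : RTree.WF rkS s) (hacc : ∀ i, TDAccept (A i) (A i).init s) :
    (RTree.node σsym (s :: List.replicate (rkS σsym - 1) (.node esym [])),
      RTree.node none (List.replicate n (s.map some))) ∈ (hardM1 rkS n A σsym esym).tau := by
  refine ⟨.node (by simp [hardM1]; omega) ?_, ?_⟩
  · intro t ht
    rcases List.mem_cons.1 ht with rfl | ht
    · exact hs
    · rw [List.eq_of_mem_replicate ht]
      exact .node he.symm (by simp)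
  · rw [RTree.map_node, RTree.map_node, mEval_node_some_iff]
    refine ⟨_, hardM1_rules_init_sigma, mExpand_out_iff.2 ⟨_, ?_, rfl⟩⟩
    rw [mExpandList_iff_forall₂, List.forall₂_map_left_iff, List.map_replicate, RTree.map_map,
      List.forall₂_iff_get]
    refine ⟨by simp, fun j _ _ => ?_⟩
    simp only [List.get_eq_getElem, List.getElem_replicate]
    exact mExpand_call_nil_iff.2 ⟨_, _, rfl, mEval_hardM1_of_tdAccept (hacc _),
      (psubst_map_out _ _ _).symm⟩

theorem exists_tdAccept_of_mem_tau_hardM1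
    (hA : ∀ i p τ ps, (A i).trans p τ = some ps → ps.length = rkS τ) (hσ : 1 ≤ rkS σsym)
    {ss : List (RTree S)} {t : RTree (Option S)}
    (h : (RTree.node σsym ss, t) ∈ (hardM1 rkS n A σsym esym).tau) :
    ∃ s, RTree.WF rkS s ∧ ∀ i, TDAccept (A i) (A i).init s := by
  obtain ⟨⟨hlen, hwf⟩, hev⟩ := h
  have hss : 0 < ss.length := hlen ▸ hσ
  refine ⟨ss[0], hwf _ (List.getElem_mem hss), fun i => ?_⟩
  rw [RTree.map_node, mEval_node_some_iff, hardM1_rules_init_sigma] at hev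
  obtain ⟨_, ⟨⟩, hexp⟩ := hev
  obtain ⟨us, hus, -⟩ := mExpand_out_iff.1 hexp
  rw [mExpandList_iff_forall₂, List.forall₂_map_left_iff, List.forall₂_iff_get] at hus
  obtain ⟨hl, hcall⟩ := hus
  have hi := hcall i (by simp) (by simp [← hl])
  simp only [List.get_eq_getElem] at hi
  rw [show (List.finRange n)[(i : ℕ)]'(by simp) = i by simp] at hi
  obtain ⟨s', u, hs', hu, -⟩ := mExpand_call_nil_iff.1 hi
  rw [List.getElem?_map, List.getElem?_eq_getElem hss, Option.map_some, Option.some_inj] at hs'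
  subst hs'
  exact tdAccept_of_mEval_hardM1 hA (hwf _ (List.getElem_mem hss)) hu

theorem tau_hardM1_eq_singleton_iff
    (hA : ∀ i p τ ps, (A i).trans p τ = some ps → ps.length = rkS τ) (hσ : 1 ≤ rkS σsym)
    (he : rkS esym = 0) :
    (hardM1 rkS n A σsym esym).tau = {(.node esym [], .node (some esym) [])} ↔
      ¬∃ s, RTree.WF rkS s ∧ ∀ i, TDAccept (A i) (A i).init s := by
  have hne : σsym ≠ esym := by rintro rfl; omega
  constructor
  · rintro h ⟨s, hs, hacc⟩
    have hmem := mem_tau_hardM1_of_tdAccept (A := A) hσ he hs hacc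
    rw [h, Set.mem_singleton_iff, Prod.mk.injEq, RTree.node.injEq] at hmem
    exact hne hmem.1.1
  · intro hno
    ext ⟨⟨a, ss⟩, t⟩
    rw [Set.mem_singleton_iff]
    by_cases hσa : a = σsym
    · subst hσa
      exact iff_of_false (fun h => hno (exists_tdAccept_of_mem_tau_hardM1 hA hσ h)) (by simp [hne])
    by_cases hea : a = esym
    · subst hea
      rw [mem_tau_node_iff_of_rules_init_eq he (hardM1_rules_init_esym hne)]
      simp
    · refine iff_of_false (fun h => ?_) (by simp [hea])
      obtain ⟨r, hr⟩ := exists_rules_init_of_mem_tau h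
      simp [hardM1, hσa, hea] at hr

end Reduction

/-- `M1` and `M2` are equivalent if and only if `L(A 0) ∩ ⋯ ∩ L(A (n-1)) = ∅`. -/
theorem tdtt_equivalence_vs_tda_intersection_emptiness
    [DecidableEq S] [Fintype S] (rkS : S → ℕ) (n : ℕ) {St : Fin n → Type}
    [∀ i, Fintype (St i)] (A : ∀ i, TDA S (St i))
    (hA : ∀ i p τ ps, (A i).trans p τ = some ps → ps.length = rkS τ)
    (σsym esym : S) (hσ : 1 ≤ rkS σsym) (he : rkS esym = 0) :
    MTT.tau (hardM1 rkS n A σsym esym) = MTT.tau (hardM2 rkS n esym) ↔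
      (⋂ i, tdaLang rkS (A i)) = ∅ := by
  -- For `n = 0` the intersection is all of `T_Σ`; the tree `e` witnesses that it is nonempty.
  have he_wf : RTree.WF rkS (.node esym []) := .node he.symm (by simp)
  rw [tau_hardM2 he, tau_hardM1_eq_singleton_iff hA hσ he, ← Set.not_nonempty_iff_eq_empty]
  exact not_congr (iInter_setOf_and_nonempty_iff ⟨_, he_wf⟩).symm
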